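/- arXiv:1204.5442 — 3 statements merged into one kernel-verified Lean document; each statement's English description precedes it below -/
import Mathlib

section
/- Let s : ℕ → ℝ satisfy s(0) = 1 and, for all i ≥ 1, s(i) ≤ 5·2^i + 2^i · ∑_{j=1}^{⌊2i/3⌋-1} 2(s(j) - s(j-1)) / 2^(3j/2), where s is nondecreasing, s(j) ≤ 258·2^j for all j ≤ 8, and for all j ≥ 1, s(j) - s(j-1) ≤ s(j-1) + 2·s(⌈2(j-1)/3⌉) + 2. Then s(i) ≤ 258·2^i for all i ≥ 0. -/
/-!
Since `s` is nonnegative and nondecreasing and `2^(3j/2) ≥ (8/3)^j`, the `j`-th term of the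
recurrence is at most `2 U(j) (3/8)^j` for any `U ≥ s`; hence `s i ≤ 2^i (5 + ∑ 2 U(j) (3/8)^j)`
whenever `U` dominates `s` below `i`. The bound `lengthBound`, which is the recurrence run with
equality up to `j = 8` and `258·2^j` afterwards, reproduces itself under this operation: for
`i ≤ 8` by direct computation, and for larger `i` because the weighted sum stays below `253`
(at most `66` from the first eight terms and a geometric tail `516 (3/4)^j` of at most `155`).
-/

open Finset

lemma eight_thirds_pow_le_two_rpow (j : ℕ) : (8 / 3 : ℝ) ^ j ≤ 2 ^ (3 * (j : ℝ) / 2) := by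
  have hbase : (8 / 3 : ℝ) ≤ 2 ^ ((3 : ℝ) / 2) := by
    have hsq : ((2 : ℝ) ^ ((3 : ℝ) / 2)) ^ 2 = 8 := by
      rw [← Real.rpow_natCast, ← Real.rpow_mul zero_le_two]; norm_num
    nlinarith [Real.rpow_pos_of_pos two_pos ((3 : ℝ) / 2)]
  calc (8 / 3 : ℝ) ^ j ≤ (2 ^ ((3 : ℝ) / 2)) ^ j := pow_le_pow_left₀ (by norm_num) hbase j
    _ = 2 ^ (3 * (j : ℝ) / 2) := by
      rw [← Real.rpow_natCast, ← Real.rpow_mul zero_le_two]; ring_nf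

lemma increment_div_le {a b U : ℝ} (hb : 0 ≤ b) (hba : b ≤ a) (haU : a ≤ U) (j : ℕ) :
    2 * (a - b) / (2 : ℝ) ^ (3 * (j : ℝ) / 2) ≤ 2 * U * (3 / 8) ^ j := by
  calc 2 * (a - b) / (2 : ℝ) ^ (3 * (j : ℝ) / 2) ≤ 2 * U / (8 / 3) ^ j :=
        div_le_div₀ (by linarith) (by linarith) (by positivity) (eight_thirds_pow_le_two_rpow j)
    _ = 2 * U * (3 / 8) ^ j := by rw [div_eq_mul_inv, ← inv_pow, inv_div]

noncomputable def recBound (U : ℕ → ℝ) (i : ℕ) : ℝ :=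
  2 ^ i * (5 + ∑ j ∈ Icc 1 (2 * i / 3 - 1), 2 * U j * (3 / 8) ^ j)

lemma le_recBound {s U : ℕ → ℝ} (hmono : Monotone s) (hs0 : 0 ≤ s 0) {i : ℕ}
    (hi : s i ≤ 5 * 2 ^ i + 2 ^ i *
      ∑ j ∈ Icc 1 (2 * i / 3 - 1), 2 * (s j - s (j - 1)) / (2 : ℝ) ^ ((3 * (j : ℝ)) / 2))
    (hU : ∀ j ∈ Icc 1 (2 * i / 3 - 1), s j ≤ U j) :
    s i ≤ recBound U i := by
  have hsum := sum_le_sum fun j hj =>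
    increment_div_le (hs0.trans (hmono (Nat.zero_le (j - 1)))) (hmono (Nat.sub_le j 1)) (hU j hj) j
  rw [recBound]
  nlinarith [pow_pos (two_pos : (0 : ℝ) < 2) i]

noncomputable def lengthBound : ℕ → ℝ
  | 1 => 10
  | 2 => 20
  | 3 => 100
  | 4 => 200
  | 5 => 580
  | 6 => 1835
  | 7 => 3670
  | 8 => 9365
  | j => 258 * 2 ^ j

lemma lengthBound_add_nine (n : ℕ) : lengthBound (n + 9) = 258 * 2 ^ (n + 9) := rfl

lemma lengthBound_nonneg (j : ℕ) : 0 ≤ lengthBound j := by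
  match j with
  | 0 | 1 | 2 | 3 | 4 | 5 | 6 | 7 | 8 => norm_num [lengthBound]
  | n + 9 => rw [lengthBound_add_nine]; positivity

lemma lengthBound_le (j : ℕ) : lengthBound j ≤ 258 * 2 ^ j := by
  match j with
  | 0 | 1 | 2 | 3 | 4 | 5 | 6 | 7 | 8 => norm_num [lengthBound]
  | n + 9 => rw [lengthBound_add_nine]

lemma sum_lengthBound_le (m : ℕ) : ∑ j ∈ Icc 1 m, 2 * lengthBound j * (3 / 8) ^ j ≤ 253 := by
  set f : ℕ → ℝ := fun j => 2 * lengthBound j * (3 / 8) ^ j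
  have hf : ∀ j, 0 ≤ f j := fun j => by have := lengthBound_nonneg j; positivity
  have head : ∑ j ∈ Ico 1 9, f j ≤ 66 := by
    norm_num [f, lengthBound, sum_Ico_succ_top]
  have tail : ∑ j ∈ Ico 9 (m + 9), f j ≤ 155 := by
    have hgeom : ∀ j ∈ Ico 9 (m + 9), f j = 516 * (3 / 4) ^ j := by
      intro j hj
      obtain ⟨n, rfl⟩ : ∃ n, j = n + 9 := ⟨j - 9, by grind⟩
      simp only [f, lengthBound_add_nine]
      rw [show ((3 : ℝ) / 4) = 2 * (3 / 8) by norm_num, mul_pow]; ring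
    rw [sum_congr rfl hgeom, ← mul_sum]
    calc 516 * ∑ j ∈ Ico 9 (m + 9), ((3 : ℝ) / 4) ^ j ≤ 516 * ((3 / 4) ^ 9 / (1 - 3 / 4)) :=
          mul_le_mul_of_nonneg_left (geom_sum_Ico_le_of_lt_one (by norm_num) (by norm_num))
            (by norm_num)
      _ ≤ 155 := by norm_num
  calc ∑ j ∈ Icc 1 m, f j ≤ ∑ j ∈ Ico 1 (m + 9), f j :=
        sum_le_sum_of_subset_of_nonneg (fun j => by simp only [mem_Icc, mem_Ico]; omega)
          fun j _ _ => hf j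
    _ = ∑ j ∈ Ico 1 9, f j + ∑ j ∈ Ico 9 (m + 9), f j :=
        (sum_Ico_consecutive f (by norm_num) (by omega)).symm
    _ ≤ 253 := by linarith

lemma recBound_lengthBound_le {i : ℕ} (hi : 1 ≤ i) : recBound lengthBound i ≤ lengthBound i := by
  rcases le_or_gt i 8 with hi8 | hi9
  · interval_cases i <;> norm_num [recBound, lengthBound, sum_Icc_succ_top]
  · obtain ⟨n, rfl⟩ : ∃ n, i = n + 9 := ⟨i - 9, by omega⟩
    rw [recBound, lengthBound_add_nine, mul_comm 258]
    gcongr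
    linarith [sum_lengthBound_le (2 * (n + 9) / 3 - 1)]

lemma le_lengthBound {s : ℕ → ℝ} (h0 : s 0 = 1) (hmono : Monotone s)
    (hrec : ∀ i : ℕ, 1 ≤ i → s i ≤ 5 * 2 ^ i + 2 ^ i *
        ∑ j ∈ Icc 1 (2 * i / 3 - 1), 2 * (s j - s (j - 1)) / (2 : ℝ) ^ ((3 * (j : ℝ)) / 2))
    (i : ℕ) : s i ≤ lengthBound i := by
  induction i using Nat.strong_induction_on with
  | _ i ih =>
    rcases Nat.eq_zero_or_pos i with rfl | hi
    · norm_num [h0, lengthBound]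
    · calc s i ≤ recBound lengthBound i :=
            le_recBound hmono (by rw [h0]; norm_num) (hrec i hi) fun j hj => ih j (by grind)
        _ ≤ lengthBound i := recBound_lengthBound_le hi

theorem stmt7_general (s : ℕ → ℝ) (h0 : s 0 = 1)
    (hrec : ∀ i : ℕ, 1 ≤ i → s i ≤ 5 * 2 ^ i + 2 ^ i *
        ∑ j ∈ Finset.Icc 1 (2 * i / 3 - 1),
          2 * (s j - s (j - 1)) / (2:ℝ) ^ ((3 * (j:ℝ)) / 2))
    (hmono : Monotone s) :
    ∀ i : ℕ, s i ≤ 258 * 2 ^ i :=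
  fun i => (le_lengthBound h0 hmono hrec i).trans (lengthBound_le i)

/-- Inductive bound `s(i) ≤ 258·2^i` for the SUES length recurrence (λ = 2). -/
theorem stmt7 (s : ℕ → ℝ) (h0 : s 0 = 1)
    (hrec : ∀ i : ℕ, 1 ≤ i → s i ≤ 5 * 2 ^ i + 2 ^ i *
        ∑ j ∈ Finset.Icc 1 (2 * i / 3 - 1),
          2 * (s j - s (j - 1)) / (2:ℝ) ^ ((3 * (j:ℝ)) / 2))
    (hmono : Monotone s)
    (hinit : ∀ j : ℕ, j ≤ 8 → s j ≤ 258 * 2 ^ j)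
    (hgap : ∀ j : ℕ, 1 ≤ j →
        s j - s (j - 1) ≤ s (j - 1) + 2 * s ((2 * (j - 1) + 2) / 3) + 2) :
    ∀ i : ℕ, s i ≤ 258 * 2 ^ i :=
  stmt7_general s h0 hrec hmono
end

section
/- Let G be a d-regular graph with an edge numbering, and consider the walk semantics of exploration sequences: from a current directed edge (u,v) where (u,v) is the s-th edge at v, the offset τ moves to the (s+τ mod d)-th edge of v. If executing τ = τ₁⋯τ_k starting from directed edge e₀ produces the sequence of directed edges e₀, e₁, …, e_k, then executing the sequence 0 τ⁻¹ 0 starting from e_k produces the sequence e_k, ẽ_k, ẽ_{k−1}, …, ẽ₀, e₀, where ẽ denotes the reverse of directed edge e and τ⁻¹ = τ_k⁻¹⋯τ₁⁻¹ with t⁻¹ = d − t mod d. -/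
/-!
Write `ẽ` for the reverse of a directed edge. The walk step `step e t` can be undone from the
reversed side: `step (rev (step e t)) (-t) = rev e`. So executing `τ⁻¹` (the negated offsets in
reverse order) from `ẽ_k` retraces `ẽ_k, ẽ_{k-1}, …, ẽ₀`, by induction on `τ`; the offsets `0`
added at both ends turn `e_k` into `ẽ_k` and `ẽ₀` back into `e₀`.
-/

section Backtrack

variable {E S : Type*} [Neg S] {rev : E → E} {step : E → S → E}

theorem foldl_reverse_map_neg_rev_foldl
    (hback : ∀ (e : E) (t : S), step (rev (step e t)) (-t) = rev e) (τs : List S) (e : E) :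
    ((τs.map (fun t => -t)).reverse).foldl step (rev (τs.foldl step e)) = rev e := by
  induction τs generalizing e with
  | nil => rfl
  | cons t ts ih =>
    simp only [List.map_cons, List.reverse_cons, List.foldl_append, List.foldl_cons, ih,
      List.foldl_nil, hback]

theorem scanl_reverse_map_neg_rev_foldl
    (hback : ∀ (e : E) (t : S), step (rev (step e t)) (-t) = rev e) (τs : List S) (e : E) :
    ((τs.map (fun t => -t)).reverse).scanl step (rev (τs.foldl step e))
      = ((τs.scanl step e).map rev).reverse := by
  induction τs generalizing e with
  | nil => rfl
  | cons t ts ih =>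
    simp only [List.map_cons, List.reverse_cons, List.foldl_cons, List.scanl_append, ih,
      foldl_reverse_map_neg_rev_foldl hback, List.scanl_cons, List.tail_cons, hback,
      List.scanl_nil]

end Backtrack

theorem stmt12_general (d : ℕ) {E : Type*} (rev : E → E)
    (hrevinv : Function.Involutive rev)
    (step : E → ZMod d → E)
    (h0 : ∀ e : E, step e 0 = rev e)
    (hback : ∀ (e : E) (t : ZMod d), step (rev (step e t)) (-t) = rev e)
    (τs : List (ZMod d)) (e0 ek : E)
    (hek : (τs.scanl step e0).getLast? = some ek) :
    List.scanl step ek (((0 : ZMod d) :: (τs.map (fun t => -t)).reverse) ++ [0])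
      = ek :: (((τs.scanl step e0).map rev).reverse ++ [e0]) := by
  obtain rfl : ek = τs.foldl step e0 := by
    rw [List.getLast?_scanl] at hek
    exact (Option.some_injective _ hek).symm
  rw [List.cons_append, List.scanl_cons, h0, List.scanl_append,
    scanl_reverse_map_neg_rev_foldl hback, foldl_reverse_map_neg_rev_foldl hback,
    List.scanl_singleton, List.tail_cons, h0, hrevinv e0]

/-- Backtracking: if executing `τ` from `e₀` yields edges `e₀,…,e_k`, then executing
`0 τ⁻¹ 0` from `e_k` yields `e_k, ẽ_k, …, ẽ₀, e₀`. The walk semantics is abstracted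
by a step function `step e t` (the edge with port `entry-port + t` at the head of `e`)
together with the reversal `rev` of directed edges, satisfying `step e 0 = rev e`
and `step (rev (step e t)) (-t) = rev e`. -/
theorem stmt12 (d : ℕ) (hd : 3 ≤ d) {E : Type*} (rev : E → E)
    (hrevinv : Function.Involutive rev)
    (step : E → ZMod d → E)
    (h0 : ∀ e : E, step e 0 = rev e)
    (hback : ∀ (e : E) (t : ZMod d), step (rev (step e t)) (-t) = rev e)
    (τs : List (ZMod d)) (e0 ek : E)
    (hek : (τs.scanl step e0).getLast? = some ek) :
    List.scanl step ek (((0 : ZMod d) :: (τs.map (fun t => -t)).reverse) ++ [0])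
      = ek :: (((τs.scanl step e0).map rev).reverse ++ [e0]) :=
  stmt12_general d rev hrevinv step h0 hback τs e0 ek hek
end

section
/- Define S : ℕ → List as follows over an alphabet containing symbols u₁, u₂, … and 0, with S(2^0) = [u₁], and for n = 2^i (i ≥ 1), S(n) = u₁ ++ B(r₁) ++ u₂ ++ B(r₂) ++ ⋯ ++ u_{n−1} ++ B(r_{n−1}) ++ u_n where B(r) = S(r) ++ [0] ++ reverse-inverse of S(r) ++ [0] and r_k = max{2^j : 2^(3j/2) ≤ k}. Then for all powers of two k < n, S(k) is a prefix of S(n), provided U_k is a prefix of U_n. -/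
/-!
Write `S (2^i)` as `u 1, B 1, u 2, B 2, …, u (n-1), B (n-1), u n` with `n = 2^i`, where the
block `B k` does not depend on `n`; for `i = 0` this is `[u 1]` as well. Such a word for `m`
is a prefix of the one for `m + 1`, since the latter only replaces the final `[u m]` by
`u m :: B m ++ [u (m + 1)]`. Hence the words are prefix-monotone in `n`, in particular along
the powers of two.
-/

section

variable {α : Type*}

/-- The word `u 1 :: B 1 ++ u 2 :: B 2 ++ ⋯ ++ u (n-1) :: B (n-1) ++ [u n]`, with `B k = g (k-1)`. -/
def interleaveBlocks (u : ℕ → α) (g : ℕ → List α) (n : ℕ) : List α :=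
  ((List.range (n - 1)).map fun k => u (k + 1) :: g k).flatten ++ [u n]

theorem interleaveBlocks_prefix_succ (u : ℕ → α) (g : ℕ → List α) {n : ℕ} (hn : 1 ≤ n) :
    interleaveBlocks u g n <+: interleaveBlocks u g (n + 1) := by
  obtain ⟨m, rfl⟩ := Nat.exists_eq_add_of_le' hn
  refine ⟨g m ++ [u (m + 2)], ?_⟩
  simp [interleaveBlocks, List.range_succ]

theorem interleaveBlocks_prefix_of_le (u : ℕ → α) (g : ℕ → List α) {m n : ℕ} (hm : 1 ≤ m)
    (hmn : m ≤ n) : interleaveBlocks u g m <+: interleaveBlocks u g n := by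
  induction n, hmn using Nat.le_induction with
  | base => exact List.prefix_rfl
  | succ n hmn ih => exact ih.trans (interleaveBlocks_prefix_succ u g (hm.trans hmn))

end

theorem stmt14_general {α : Type*} (u : ℕ → α) (z : α) (inv : α → α)
    (r : ℕ → ℕ)
    (S : ℕ → List α)
    (hS1 : S 1 = [u 1])
    (hSn : ∀ i : ℕ, 1 ≤ i → S (2 ^ i) =
        ((List.range (2 ^ i - 1)).map (fun k =>
          u (k + 1) :: (S (r (k + 1)) ++ [z] ++
            ((S (r (k + 1))).map inv).reverse ++ [z]))).flatten ++ [u (2 ^ i)]) :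
    ∀ p q : ℕ, p ≤ q → S (2 ^ p) <+: S (2 ^ q) := by
  set block : ℕ → List α := fun k =>
    S (r (k + 1)) ++ [z] ++ ((S (r (k + 1))).map inv).reverse ++ [z]
  have hS : ∀ i, S (2 ^ i) = interleaveBlocks u block (2 ^ i) := by
    rintro (_ | i)
    · simp [hS1, interleaveBlocks]
    · exact hSn (i + 1) (Nat.succ_pos i)
  intro p q hpq
  rw [hS p, hS q]
  exact interleaveBlocks_prefix_of_le u block Nat.one_le_two_pow
    (Nat.pow_le_pow_right two_pos hpq)

/-- Prefix closure of the recursively constructed SUES family: for powers of two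
`2^p ≤ 2^q`, `S (2^p)` is a prefix of `S (2^q)`. -/
theorem stmt14 {α : Type*} (u : ℕ → α) (z : α) (inv : α → α)
    (r : ℕ → ℕ)
    (hr : ∀ k : ℕ, 1 ≤ k → IsGreatest {x : ℕ | ∃ j : ℕ,
        x = 2 ^ j ∧ (2:ℝ) ^ ((3 * (j:ℝ)) / 2) ≤ (k:ℝ)} (r k))
    (S : ℕ → List α)
    (hS1 : S 1 = [u 1])
    (hSn : ∀ i : ℕ, 1 ≤ i → S (2 ^ i) =
        ((List.range (2 ^ i - 1)).map (fun k =>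
          u (k + 1) :: (S (r (k + 1)) ++ [z] ++
            ((S (r (k + 1))).map inv).reverse ++ [z]))).flatten ++ [u (2 ^ i)]) :
    ∀ p q : ℕ, p ≤ q → S (2 ^ p) <+: S (2 ^ q) :=
  stmt14_general u z inv r S hS1 hSn
end
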